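/- Let f : ℝ^n → ℝ be differentiable with gradient ∇f, attain its minimum value f* at a unique minimizer x*, and satisfy the PL inequality (1/2)‖∇f(x)‖² ≥ μ(f(x) − f*) for all x, with μ > 0, as well as the quadratic growth condition f(x) − f* ≥ (μ/2)‖x − x*‖² for all x. Let ε : ℝ^n → ℝ^n satisfy ‖ε(x)‖ ≤ l·‖x − x*‖² for all x, with l > 0. Let c1, c2 > 0 satisfy c1 > l/μ² and c2 > l/μ², let p1 > 2 and p2 ∈ (1, 3/2], and set l̄ := l/μ², α := p1/(2(p1−1)), β := p2/(2(p2−1)), p := (c1 − l̄)(2μ)^α, q := (c2 − l̄)(2μ)^β, T := 1/(p(1−α)) + 1/(q(β−1)). Then every differentiable curve x : ℝ → ℝ^n satisfying, for all t ≥ 0, x′(t) = −c1∇f(x(t))/‖∇f(x(t))‖^((p1−2)/(p1−1)) − c2∇f(x(t))/‖∇f(x(t))‖^((p2−2)/(p2−1)) + ε(x(t)) when ∇f(x(t)) ≠ 0, and x′(t) = 0 when ∇f(x(t)) = 0, satisfies x(t) = x* for all t ≥ T. -/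

import Mathlib

/-!
Along the flow, `V t = f (x t) - f*` has derivative `⟪∇f, ẋ⟫`. The disturbance contributes at most
`l ‖x - x*‖² ‖∇f‖ ≤ l̄ ‖∇f‖³` by quadratic growth and PL, and `‖∇f‖³ ≤ ‖∇f‖^(2α) + ‖∇f‖^(2β)` since
`2α ≤ 3 ≤ 2β`; so it only lowers `c1, c2` to `c1 - l̄, c2 - l̄`, and PL turns the result into
`V' ≤ -p V^α - q V^β`. Under this inequality `V^(1-β)` grows at rate at least `q (β - 1)`, so
`V ≤ 1` after time `1 / (q (β - 1))`; from then on `V^(1-α)` decreases at rate at least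
`p (1 - α)`, so `V` vanishes within a further `1 / (p (1 - α))`.
-/

open Set
open scoped RealInnerProductSpace

theorem rpow_one_sub_div_sub_le_of_hasDerivAt_le {V V' : ℝ → ℝ} {a b k δ : ℝ} (hδ : δ ≠ 1)
    (hab : a ≤ b) (hV : ∀ s ∈ Icc a b, HasDerivAt V (V' s) s) (hpos : ∀ s ∈ Icc a b, 0 < V s)
    (hV' : ∀ s ∈ Icc a b, V' s ≤ -(k * V s ^ δ)) :
    V b ^ (1 - δ) / (1 - δ) - V a ^ (1 - δ) / (1 - δ) ≤ -k * (b - a) := by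
  have hW : ∀ s ∈ Icc a b, HasDerivAt (fun u => V u ^ (1 - δ) / (1 - δ))
      (V' s * V s ^ (-δ)) s := fun s hs => by
    refine (((hV s hs).rpow_const (Or.inl (hpos s hs).ne')).div_const (1 - δ)).congr_deriv ?_
    rw [sub_sub_cancel_left, mul_right_comm, mul_div_cancel_right₀ _ (sub_ne_zero.2 hδ.symm)]
  refine (convex_Icc a b).image_sub_le_mul_sub_of_deriv_le
    (fun s hs => (hW s hs).continuousAt.continuousWithinAt)
    (fun s hs => (hW s (interior_subset hs)).differentiableAt.differentiableWithinAt)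
    (fun s hs => ?_) a (left_mem_Icc.2 hab) b (right_mem_Icc.2 hab) hab
  have hs := interior_subset hs
  have hVδ : V s ^ δ * V s ^ (-δ) = 1 := by
    rw [← Real.rpow_add (hpos s hs), add_neg_cancel, Real.rpow_zero]
  rw [(hW s hs).deriv]
  calc V' s * V s ^ (-δ) ≤ -(k * V s ^ δ) * V s ^ (-δ) :=
        mul_le_mul_of_nonneg_right (hV' s hs) (Real.rpow_nonneg (hpos s hs).le _)
    _ = -k := by rw [neg_mul, mul_assoc, hVδ, mul_one]

theorem antitoneOn_Ici_of_hasDerivAt_nonpos {V V' : ℝ → ℝ} {a : ℝ}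
    (hV : ∀ t, a ≤ t → HasDerivAt V (V' t) t) (hV' : ∀ t, a ≤ t → V' t ≤ 0) :
    AntitoneOn V (Ici a) :=
  antitoneOn_of_deriv_nonpos (convex_Ici a)
    (fun t ht => (hV t ht).continuousAt.continuousWithinAt)
    (fun t ht => (hV t (interior_subset ht)).differentiableAt.differentiableWithinAt)
    (fun t ht => (hV t (interior_subset ht)).deriv ▸ hV' t (interior_subset ht))

theorem eq_zero_of_hasDerivAt_le_neg_rpow_sub_rpow {V V' : ℝ → ℝ} {p q α β : ℝ}
    (hp : 0 < p) (hq : 0 < q) (hα : α < 1) (hβ : 1 < β)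
    (hV : ∀ t, 0 ≤ t → HasDerivAt V (V' t) t) (hV0 : ∀ t, 0 ≤ t → 0 ≤ V t)
    (hV' : ∀ t, 0 ≤ t → V' t ≤ -(p * V t ^ α) - q * V t ^ β) {t : ℝ}
    (ht : 1 / (p * (1 - α)) + 1 / (q * (β - 1)) ≤ t) : V t = 0 := by
  have hα' : 0 < 1 - α := sub_pos.2 hα
  have hβ' : 0 < β - 1 := sub_pos.2 hβ
  set t₁ := 1 / (q * (β - 1)) with ht₁
  set t₂ := t₁ + 1 / (p * (1 - α)) with ht₂
  have ht₁0 : 0 ≤ t₁ := by positivity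
  have ht₁₂ : t₁ ≤ t₂ := le_add_of_nonneg_right (by positivity)
  have hanti : AntitoneOn V (Ici 0) := antitoneOn_Ici_of_hasDerivAt_nonpos hV fun s hs => by
    linarith [hV' s hs, mul_nonneg hp.le (Real.rpow_nonneg (hV0 s hs) α),
      mul_nonneg hq.le (Real.rpow_nonneg (hV0 s hs) β)]
  have hpos {a b : ℝ} (ha : 0 ≤ a) (hb : 0 < V b) : ∀ s ∈ Icc a b, 0 < V s := fun s hs =>
    hb.trans_le (hanti (ha.trans hs.1) (ha.trans (hs.1.trans hs.2)) hs.2)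
  have hdec {δ k : ℝ} (hδ : δ ≠ 1) {a b : ℝ} (ha : 0 ≤ a) (hab : a ≤ b) (hb : 0 < V b)
      (hk : ∀ s, 0 ≤ s → V' s ≤ -(k * V s ^ δ)) :=
    rpow_one_sub_div_sub_le_of_hasDerivAt_le hδ hab (fun s hs => hV s (ha.trans hs.1))
      (hpos ha hb) (fun s hs => hk s (ha.trans hs.1))
  have hVt₁ : V t₁ ≤ 1 := by
    rcases (hV0 t₁ ht₁0).eq_or_lt with h0 | h0
    · linarith
    have key := hdec (k := q) hβ.ne' le_rfl ht₁0 h0 fun s hs => by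
      linarith [hV' s hs, mul_nonneg hp.le (Real.rpow_nonneg (hV0 s hs) α)]
    have e₁ : V t₁ ^ (1 - β) / (1 - β) - V 0 ^ (1 - β) / (1 - β)
        = (V 0 ^ (1 - β) - V t₁ ^ (1 - β)) / (β - 1) := by
      rw [div_sub_div_same, ← neg_div_neg_eq, neg_sub, neg_sub]
    have e₂ : -q * (t₁ - 0) = -1 / (β - 1) := by
      rw [sub_zero, ht₁]; field_simp
    rw [e₁, e₂, div_le_div_iff_of_pos_right hβ'] at key
    by_contra! h1
    linarith [Real.rpow_lt_one_of_one_lt_of_neg h1 (by linarith : 1 - β < 0),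
      Real.rpow_pos_of_pos (hpos le_rfl h0 0 ⟨le_rfl, ht₁0⟩) (1 - β)]
  have hVt₂ : V t₂ = 0 := by
    by_contra h0
    have h0 := (hV0 t₂ (ht₁0.trans ht₁₂)).lt_of_ne' h0
    have key := hdec (k := p) hα.ne ht₁0 ht₁₂ h0 fun s hs => by
      linarith [hV' s hs, mul_nonneg hq.le (Real.rpow_nonneg (hV0 s hs) β)]
    have e : -p * (t₂ - t₁) = -1 / (1 - α) := by
      rw [ht₂, add_sub_cancel_left]; field_simp
    rw [← sub_div, e, div_le_div_iff_of_pos_right hα'] at key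
    linarith [Real.rpow_le_one (hV0 t₁ ht₁0) hVt₁ hα'.le, Real.rpow_pos_of_pos h0 (1 - α)]
  have htt₂ : t₂ ≤ t := by linarith
  exact le_antisymm (hVt₂ ▸ hanti (ht₁0.trans ht₁₂) (ht₁0.trans (ht₁₂.trans htt₂)) htt₂)
    (hV0 t (ht₁0.trans (ht₁₂.trans htt₂)))

theorem Real.rpow_le_rpow_add_rpow {x a b c : ℝ} (hx : 0 < x) (hac : a ≤ c) (hcb : c ≤ b) :
    x ^ c ≤ x ^ a + x ^ b := by
  rcases le_total x 1 with h | h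
  · linarith [Real.rpow_le_rpow_of_exponent_ge hx h hac, Real.rpow_nonneg hx.le b]
  · linarith [Real.rpow_le_rpow_of_exponent_le h hcb, Real.rpow_nonneg hx.le a]

theorem Real.rpow_le_rpow_two_mul {a x γ : ℝ} (ha : 0 ≤ a) (hx : 0 ≤ x) (h : a ≤ x ^ 2)
    (hγ : 0 ≤ γ) : a ^ γ ≤ x ^ (2 * γ) := by
  rw [Real.rpow_mul hx, Real.rpow_two]
  exact Real.rpow_le_rpow ha h hγ

theorem two_sub_div_eq (p : ℝ) (hp : p ≠ 1) : 2 - (p - 2) / (p - 1) = 2 * (p / (2 * (p - 1))) := by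
  field_simp [sub_ne_zero.2 hp]
  ring

section InnerProductSpace

variable {E : Type*} [NormedAddCommGroup E] [InnerProductSpace ℝ E]

theorem HasGradientAt.comp_hasDerivAt [CompleteSpace E] {f : E → ℝ} {g v : E} {x : ℝ → E}
    {t : ℝ} (hf : HasGradientAt f g (x t)) (hx : HasDerivAt x v t) :
    HasDerivAt (fun s => f (x s)) ⟪g, v⟫ t := by
  simpa [InnerProductSpace.toDual_apply_apply, Function.comp_def] using
    hf.hasFDerivAt.comp_hasDerivAt t hx

theorem real_inner_div_norm_rpow_smul_self (c r : ℝ) {g : E} (hg : g ≠ 0) :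
    ⟪g, (c / ‖g‖ ^ r) • g⟫ = c * ‖g‖ ^ (2 - r) := by
  have hg : 0 < ‖g‖ := norm_pos_iff.2 hg
  rw [real_inner_smul_right, real_inner_self_eq_norm_sq, ← Real.rpow_two, Real.rpow_sub hg]
  ring

theorem real_inner_le_div_sq_mul_norm_pow_three {g e : E} {μ l V d : ℝ} (hμ : 0 < μ)
    (hl : 0 ≤ l) (hPL : μ * V ≤ 1 / 2 * ‖g‖ ^ 2) (hQG : μ / 2 * d ^ 2 ≤ V)
    (he : ‖e‖ ≤ l * d ^ 2) : ⟪g, e⟫ ≤ l / μ ^ 2 * ‖g‖ ^ 3 := by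
  have hd : μ ^ 2 * d ^ 2 ≤ ‖g‖ ^ 2 := by nlinarith
  have he' : ‖e‖ ≤ l / μ ^ 2 * ‖g‖ ^ 2 :=
    calc ‖e‖ ≤ l * d ^ 2 := he
      _ = l / μ ^ 2 * (μ ^ 2 * d ^ 2) := by field_simp
      _ ≤ l / μ ^ 2 * ‖g‖ ^ 2 := by gcongr
  calc ⟪g, e⟫ ≤ ‖g‖ * ‖e‖ := real_inner_le_norm g e
    _ ≤ ‖g‖ * (l / μ ^ 2 * ‖g‖ ^ 2) := by gcongr
    _ = l / μ ^ 2 * ‖g‖ ^ 3 := by ring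

-- `DecidableEq E` rather than classical decidability, so that on `EuclideanSpace` this unfolds
-- to the `if` of the flow equation, which uses `WithLp.instDecidableEq`.
noncomputable def fxtsField [DecidableEq E] (f' ε : E → E) (c₁ c₂ p₁ p₂ : ℝ) (y : E) : E :=
  if f' y = 0 then 0 else
    -(c₁ / ‖f' y‖ ^ ((p₁ - 2) / (p₁ - 1))) • f' y
      - (c₂ / ‖f' y‖ ^ ((p₂ - 2) / (p₂ - 1))) • f' y + ε y

theorem real_inner_fxtsField_le [DecidableEq E] {f : E → ℝ} {f' ε : E → E} {xstar y : E}
    {fstar μ l c₁ c₂ p₁ p₂ α β : ℝ} (hμ : 0 < μ) (hmin : fstar ≤ f y)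
    (hPL : μ * (f y - fstar) ≤ 1 / 2 * ‖f' y‖ ^ 2)
    (hQG : μ / 2 * ‖y - xstar‖ ^ 2 ≤ f y - fstar) (hl : 0 ≤ l)
    (hε : ‖ε y‖ ≤ l * ‖y - xstar‖ ^ 2) (hc₁ : l / μ ^ 2 ≤ c₁) (hc₂ : l / μ ^ 2 ≤ c₂)
    (hp₁ : 3 / 2 ≤ p₁) (hp₂ : p₂ ∈ Ioc (1 : ℝ) (3 / 2))
    (hα : α = p₁ / (2 * (p₁ - 1))) (hβ : β = p₂ / (2 * (p₂ - 1))) :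
    ⟪f' y, fxtsField f' ε c₁ c₂ p₁ p₂ y⟫ ≤
      -((c₁ - l / μ ^ 2) * (2 * μ) ^ α * (f y - fstar) ^ α)
        - (c₂ - l / μ ^ 2) * (2 * μ) ^ β * (f y - fstar) ^ β := by
  obtain ⟨hp₂, hp₂'⟩ := hp₂
  have hα0 : 0 < α := by rw [hα]; exact div_pos (by linarith) (by linarith)
  have hβ0 : 0 < β := by rw [hβ]; exact div_pos (by linarith) (by linarith)
  set L := l / μ ^ 2
  set V := f y - fstar
  have hV : 0 ≤ V := sub_nonneg.2 hmin
  unfold fxtsField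
  split_ifs with hg
  · have hV0 : V = 0 := by
      rw [hg, norm_zero] at hPL
      nlinarith
    simp [hV0, Real.zero_rpow hα0.ne', Real.zero_rpow hβ0.ne']
  set G := ‖f' y‖
  have hG : 0 < G := norm_pos_iff.2 hg
  have hα3 : 2 * α ≤ 3 := by
    rw [hα, ← two_sub_div_eq p₁ (by linarith), sub_le_iff_le_add, ← sub_le_iff_le_add',
      le_div_iff₀ (by linarith)]
    linarith
  have hβ3 : 3 ≤ 2 * β := by
    rw [hβ, ← two_sub_div_eq p₂ (by linarith), le_sub_iff_add_le, ← le_sub_iff_add_le',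
      div_le_iff₀ (by linarith)]
    linarith
  have hperturb : ⟪f' y, ε y⟫ ≤ L * (G ^ (2 * α) + G ^ (2 * β)) :=
    calc ⟪f' y, ε y⟫ ≤ L * G ^ (3 : ℝ) := by
          rw [Real.rpow_ofNat]
          exact real_inner_le_div_sq_mul_norm_pow_three hμ hl hPL hQG hε
      _ ≤ L * (G ^ (2 * α) + G ^ (2 * β)) := by
          gcongr
          exact Real.rpow_le_rpow_add_rpow hG hα3 hβ3
  have hPLpow (γ : ℝ) (hγ : 0 ≤ γ) : (2 * μ) ^ γ * V ^ γ ≤ G ^ (2 * γ) := by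
    rw [← Real.mul_rpow (by positivity) hV]
    exact Real.rpow_le_rpow_two_mul (by positivity) hG.le (by linarith) hγ
  rw [inner_add_right, inner_sub_right, ← neg_div,
    real_inner_div_norm_rpow_smul_self _ _ hg, real_inner_div_norm_rpow_smul_self _ _ hg,
    two_sub_div_eq p₁ (by linarith), two_sub_div_eq p₂ (by linarith), ← hα, ← hβ]
  have h₁ := mul_le_mul_of_nonneg_left (hPLpow α hα0.le) (sub_nonneg.2 hc₁)
  have h₂ := mul_le_mul_of_nonneg_left (hPLpow β hβ0.le) (sub_nonneg.2 hc₂)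
  linarith

end InnerProductSpace

theorem stmt_7_general (n : ℕ) (f : EuclideanSpace ℝ (Fin n) → ℝ)
    (f' : EuclideanSpace ℝ (Fin n) → EuclideanSpace ℝ (Fin n))
    (hgrad : ∀ y, HasGradientAt f (f' y) y)
    (xstar : EuclideanSpace ℝ (Fin n)) (fstar μ : ℝ) (hμ : 0 < μ)
    (hmin : ∀ y, fstar ≤ f y)
    (huniq : ∀ y, f y = fstar → y = xstar)
    (hPL : ∀ y, μ * (f y - fstar) ≤ (1 / 2) * ‖f' y‖ ^ 2)
    (hQG : ∀ y, (μ / 2) * ‖y - xstar‖ ^ 2 ≤ f y - fstar)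
    (ε : EuclideanSpace ℝ (Fin n) → EuclideanSpace ℝ (Fin n))
    (l : ℝ) (hl : 0 < l)
    (hε : ∀ y, ‖ε y‖ ≤ l * ‖y - xstar‖ ^ 2)
    (c1 c2 p1 p2 : ℝ)
    (hc1l : l / μ ^ 2 < c1) (hc2l : l / μ ^ 2 < c2)
    (hp1 : 2 < p1) (hp2 : p2 ∈ Set.Ioc (1 : ℝ) (3 / 2))
    (lbar α β p q T : ℝ) (hlbar : lbar = l / μ ^ 2)
    (hα : α = p1 / (2 * (p1 - 1))) (hβ : β = p2 / (2 * (p2 - 1)))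
    (hpdef : p = (c1 - lbar) * (2 * μ) ^ α) (hqdef : q = (c2 - lbar) * (2 * μ) ^ β)
    (hT : T = 1 / (p * (1 - α)) + 1 / (q * (β - 1))) :
    ∀ x : ℝ → EuclideanSpace ℝ (Fin n),
      (∀ t, 0 ≤ t → HasDerivAt x
        (if f' (x t) = 0 then 0 else
          -(c1 / ‖f' (x t)‖ ^ ((p1 - 2) / (p1 - 1))) • f' (x t)
            - (c2 / ‖f' (x t)‖ ^ ((p2 - 2) / (p2 - 1))) • f' (x t)
            + ε (x t)) t) →
      ∀ t, T ≤ t → x t = xstar := by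
  intro x hx t ht
  subst hlbar hpdef hqdef hT
  have hα1 : α < 1 := by rw [hα, div_lt_one (by linarith)]; linarith
  have hβ1 : 1 < β := by rw [hβ, lt_div_iff₀ (by linarith [hp2.1])]; linarith [hp2.2]
  have hp : 0 < (c1 - l / μ ^ 2) * (2 * μ) ^ α :=
    mul_pos (sub_pos.2 hc1l) (Real.rpow_pos_of_pos (by positivity) α)
  have hq : 0 < (c2 - l / μ ^ 2) * (2 * μ) ^ β :=
    mul_pos (sub_pos.2 hc2l) (Real.rpow_pos_of_pos (by positivity) β)
  have hderiv (s : ℝ) (hs : 0 ≤ s) : HasDerivAt (fun s => f (x s) - fstar)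
      ⟪f' (x s), fxtsField f' ε c1 c2 p1 p2 (x s)⟫ s :=
    ((hgrad (x s)).comp_hasDerivAt (hx s hs)).sub_const fstar
  have hdecay (s : ℝ) (_ : 0 ≤ s) := real_inner_fxtsField_le hμ (hmin (x s)) (hPL (x s))
    (hQG (x s)) hl.le (hε (x s)) hc1l.le hc2l.le (by linarith) hp2 hα hβ
  have hV := eq_zero_of_hasDerivAt_le_neg_rpow_sub_rpow hp hq hα1 hβ1 hderiv
    (fun s _ => sub_nonneg.2 (hmin (x s))) hdecay ht
  exact huniq _ (sub_eq_zero.1 hV)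

/-- Theorem 2, robustness of FxTS-GF: the perturbed FxTS-GF flow
with a vanishing additive disturbance `ε` (with `‖ε(x)‖ ≤ l‖x-x*‖²`) still
reaches the optimizer `x*` within the fixed time `T` built from the reduced
coefficients `c1 - l̄`, `c2 - l̄`, where `l̄ = l/μ²`. -/
theorem stmt_7 (n : ℕ) (f : EuclideanSpace ℝ (Fin n) → ℝ)
    (f' : EuclideanSpace ℝ (Fin n) → EuclideanSpace ℝ (Fin n))
    (hgrad : ∀ y, HasGradientAt f (f' y) y)
    (xstar : EuclideanSpace ℝ (Fin n)) (fstar μ : ℝ) (hμ : 0 < μ)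
    (hfstar : f xstar = fstar) (hmin : ∀ y, fstar ≤ f y)
    (huniq : ∀ y, f y = fstar → y = xstar)
    (hPL : ∀ y, μ * (f y - fstar) ≤ (1 / 2) * ‖f' y‖ ^ 2)
    (hQG : ∀ y, (μ / 2) * ‖y - xstar‖ ^ 2 ≤ f y - fstar)
    (ε : EuclideanSpace ℝ (Fin n) → EuclideanSpace ℝ (Fin n))
    (l : ℝ) (hl : 0 < l)
    (hε : ∀ y, ‖ε y‖ ≤ l * ‖y - xstar‖ ^ 2)
    (c1 c2 p1 p2 : ℝ) (hc1 : 0 < c1) (hc2 : 0 < c2)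
    (hc1l : l / μ ^ 2 < c1) (hc2l : l / μ ^ 2 < c2)
    (hp1 : 2 < p1) (hp2 : p2 ∈ Set.Ioc (1 : ℝ) (3 / 2))
    (lbar α β p q T : ℝ) (hlbar : lbar = l / μ ^ 2)
    (hα : α = p1 / (2 * (p1 - 1))) (hβ : β = p2 / (2 * (p2 - 1)))
    (hpdef : p = (c1 - lbar) * (2 * μ) ^ α) (hqdef : q = (c2 - lbar) * (2 * μ) ^ β)
    (hT : T = 1 / (p * (1 - α)) + 1 / (q * (β - 1))) :
    ∀ x : ℝ → EuclideanSpace ℝ (Fin n),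
      (∀ t, 0 ≤ t → HasDerivAt x
        (if f' (x t) = 0 then 0 else
          -(c1 / ‖f' (x t)‖ ^ ((p1 - 2) / (p1 - 1))) • f' (x t)
            - (c2 / ‖f' (x t)‖ ^ ((p2 - 2) / (p2 - 1))) • f' (x t)
            + ε (x t)) t) →
      ∀ t, T ≤ t → x t = xstar :=
  stmt_7_general n f f' hgrad xstar fstar μ hμ hmin huniq hPL hQG ε l hl hε c1 c2 p1 p2 hc1l hc2l
    hp1 hp2 lbar α β p q T hlbar hα hβ hpdef hqdef hT
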